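/- For every r > 0 and every λ > 0, the Laplace transform of the density p_r satisfies ∫₀^∞ e^{−λt} · (1 / (r·√(2πt))) · (1 − exp(−r²/(2t))) dt = (1 / (√(2λ) · r)) · (1 − exp(−√(2λ) · r)). (This establishes the equivalence of statements (c) and (d) of the paper.) -/

import Mathlib

/-!
After the substitution `t = s²` the transform is a difference of two integrals
`∫₀^∞ exp (-(b s² + c / s²)) ds = √(π / b) / 2 * exp (-2 √(b c))`, with `b = λ` and `c = 0`,
`c = r² / 2`. For `c > 0` complete the square, `b s² + c / s² = (α s - β / s)² + 2 α β` with
`α = √b`, `β = √c`. The map `s ↦ α s - β / s` is an increasing bijection of `(0, ∞)` onto `ℝ`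
with derivative `α + β / s²`, and the inversion `s ↦ β / (α s)` shows that against an even
function the two summands `α` and `β / s²` contribute equally, whence
`∫₀^∞ f (α s - β / s) ds = (2 α)⁻¹ ∫ f` (a case of Glasser's master theorem).
-/

open MeasureTheory Real Set

section Glasser

variable {E : Type*} [NormedAddCommGroup E] [NormedSpace ℝ E] {α β : ℝ}

theorem hasDerivAt_mul_sub_div (α β : ℝ) {s : ℝ} (hs : s ≠ 0) :
    HasDerivAt (fun s => α * s - β / s) (α + β / s ^ 2) s := by
  have h : HasDerivAt (fun s => α * s - β * s⁻¹) (α * 1 - β * -(s ^ 2)⁻¹) s :=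
    ((hasDerivAt_id s).const_mul α).sub ((hasDerivAt_inv hs).const_mul β)
  simp only [div_eq_mul_inv]
  exact h.congr_deriv (by ring)

theorem strictMonoOn_mul_sub_div (hα : 0 ≤ α) (hβ : 0 < β) :
    StrictMonoOn (fun s => α * s - β / s) (Ioi 0) := fun x hx y _ hxy => by
  have := mul_le_mul_of_nonneg_left hxy.le hα
  have := div_lt_div_of_pos_left hβ hx hxy
  dsimp only
  linarith

theorem image_mul_sub_div_Ioi (hα : 0 < α) (hβ : 0 < β) :
    (fun s => α * s - β / s) '' Ioi 0 = univ := by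
  refine eq_univ_of_forall fun u => ?_
  -- the positive root of `α s² - u s - β = 0`
  set d := √(u ^ 2 + 4 * α * β)
  have hd : d ^ 2 = u ^ 2 + 4 * α * β := sq_sqrt (by positivity)
  have hud : 0 < u + d := by
    nlinarith [sqrt_nonneg (u ^ 2 + 4 * α * β), sq_nonneg (d + u)]
  refine ⟨(u + d) / (2 * α), div_pos hud (by positivity), ?_⟩
  field_simp
  nlinarith

theorem integrableOn_Ioi_comp_mul_sub_div_iff (hα : 0 < α) (hβ : 0 < β) (f : ℝ → E) :
    IntegrableOn (fun s => (α + β / s ^ 2) • f (α * s - β / s)) (Ioi 0) ↔ Integrable f := by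
  have h := integrableOn_image_iff_integrableOn_abs_deriv_smul measurableSet_Ioi
    (fun s hs => (hasDerivAt_mul_sub_div α β (ne_of_gt hs)).hasDerivWithinAt)
    (strictMonoOn_mul_sub_div hα.le hβ).injOn f
  rw [image_mul_sub_div_Ioi hα hβ, integrableOn_univ] at h
  rw [h]
  refine integrableOn_congr_fun (fun s hs => ?_) measurableSet_Ioi
  have : 0 < α + β / s ^ 2 := by have : (0 : ℝ) < s := hs; positivity
  rw [abs_of_pos this]

theorem integral_comp_mul_sub_div_Ioi (hα : 0 < α) (hβ : 0 < β) (f : ℝ → E) :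
    ∫ s in Ioi 0, (α + β / s ^ 2) • f (α * s - β / s) = ∫ u, f u := by
  have h := integral_image_eq_integral_abs_deriv_smul measurableSet_Ioi
    (fun s hs => (hasDerivAt_mul_sub_div α β (ne_of_gt hs)).hasDerivWithinAt)
    (strictMonoOn_mul_sub_div hα.le hβ).injOn f
  rw [image_mul_sub_div_Ioi hα hβ, setIntegral_univ] at h
  rw [h]
  refine setIntegral_congr_fun measurableSet_Ioi (fun s hs => ?_)
  have : 0 < α + β / s ^ 2 := by have : (0 : ℝ) < s := hs; positivity
  rw [abs_of_pos this]

theorem integral_comp_const_div_Ioi (g : ℝ → E) {k : ℝ} (hk : 0 < k) :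
    ∫ u in Ioi 0, (k / u ^ 2) • g (k / u) = ∫ s in Ioi 0, g s := by
  have himage : (fun u => k / u) '' Ioi 0 = Ioi 0 := by
    refine Subset.antisymm (image_subset_iff.2 fun u hu => div_pos hk hu) fun s hs => ?_
    exact ⟨k / s, div_pos hk hs, div_div_cancel₀ hk.ne'⟩
  have hderiv : ∀ u ∈ Ioi (0 : ℝ), HasDerivWithinAt (fun u => k / u) (-(k / u ^ 2)) (Ioi 0) u :=
    fun u hu => by
      have h : HasDerivAt (fun u => k * u⁻¹) (k * -(u ^ 2)⁻¹) u :=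
        (hasDerivAt_inv (ne_of_gt hu)).const_mul k
      simp only [div_eq_mul_inv]
      exact (h.congr_deriv (by ring)).hasDerivWithinAt
  have hinj : InjOn (fun u => k / u) (Ioi 0) := fun x _ y _ h =>
    inv_injective (mul_left_cancel₀ hk.ne' h)
  have h := integral_image_eq_integral_abs_deriv_smul measurableSet_Ioi hderiv hinj g
  rw [himage] at h
  rw [h]
  refine setIntegral_congr_fun measurableSet_Ioi (fun u hu => ?_)
  have : 0 < k / u ^ 2 := by have : (0 : ℝ) < u := hu; positivity
  rw [abs_neg, abs_of_pos this]

theorem integral_smul_comp_mul_sub_div_Ioi (hα : 0 < α) (hβ : 0 < β) (f : ℝ → E) :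
    ∫ s in Ioi 0, α • f (α * s - β / s) = ∫ s in Ioi 0, (β / s ^ 2) • f (-(α * s - β / s)) := by
  -- the inversion `s ↦ (β / α) / s` exchanges `α ds` and `β / s² ds` and reverses `α s - β / s`
  rw [← integral_comp_const_div_Ioi _ (div_pos hβ hα)]
  refine setIntegral_congr_fun measurableSet_Ioi (fun s hs => ?_)
  have : (0 : ℝ) < s := hs
  have harg : α * (β / α / s) - β / (β / α / s) = -(α * s - β / s) := by
    field_simp
    ring
  rw [harg, smul_smul]
  congr 1
  field_simp

theorem integrableOn_Ioi_comp_mul_sub_div (hα : 0 < α) (hβ : 0 < β) {f : ℝ → E}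
    (hf : Integrable f) : IntegrableOn (fun s => f (α * s - β / s)) (Ioi 0) := by
  have hsum := (integrableOn_Ioi_comp_mul_sub_div_iff hα hβ f).2 hf
  have hφ : Measurable fun s : ℝ => (α + β / s ^ 2)⁻¹ := by fun_prop
  refine IntegrableOn.congr_fun (hsum.bdd_smul α⁻¹ hφ.aestronglyMeasurable ?_)
    (fun s hs => ?_) measurableSet_Ioi
  · refine (ae_restrict_iff' measurableSet_Ioi).2 (Filter.Eventually.of_forall fun s hs => ?_)
    have : (0 : ℝ) < s := hs
    rw [norm_inv, Real.norm_of_nonneg (by positivity)]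
    exact inv_anti₀ hα (le_add_of_nonneg_right (by positivity))
  · have : 0 < α + β / s ^ 2 := by have : (0 : ℝ) < s := hs; positivity
    simp only [Pi.smul_apply', smul_smul, inv_mul_cancel₀ this.ne', one_smul]

theorem integral_comp_mul_sub_div_Ioi_of_even (hα : 0 < α) (hβ : 0 < β) {f : ℝ → E}
    (hf : Integrable f) (heven : ∀ u, f (-u) = f u) :
    ∫ s in Ioi 0, f (α * s - β / s) = (2 * α)⁻¹ • ∫ u, f u := by
  have hleft : IntegrableOn (fun s => α • f (α * s - β / s)) (Ioi 0) :=
    (integrableOn_Ioi_comp_mul_sub_div hα hβ hf).smul α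
  have hright : IntegrableOn (fun s => (β / s ^ 2) • f (α * s - β / s)) (Ioi 0) :=
    (((integrableOn_Ioi_comp_mul_sub_div_iff hα hβ f).2 hf).sub hleft).congr_fun
      (fun s _ => by simp [add_smul]) measurableSet_Ioi
  have hswap : ∫ s in Ioi 0, (β / s ^ 2) • f (α * s - β / s)
      = ∫ s in Ioi 0, α • f (α * s - β / s) := by
    simp only [integral_smul_comp_mul_sub_div_Ioi hα hβ f, heven]
  have h : ∫ u, f u = (2 * α) • ∫ s in Ioi 0, f (α * s - β / s) := by
    rw [← integral_comp_mul_sub_div_Ioi hα hβ f]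
    simp only [add_smul]
    rw [integral_add hleft hright, hswap, integral_smul, ← two_smul ℝ, smul_smul]
  rw [h, smul_smul, inv_mul_cancel₀ (by positivity), one_smul]

end Glasser

theorem exp_neg_mul_sq_add_div_sq {b c : ℝ} (hb : 0 ≤ b) (hc : 0 ≤ c) {s : ℝ} (hs : s ≠ 0) :
    exp (-(b * s ^ 2 + c / s ^ 2)) = exp (-(2 * √(b * c))) * exp (-(√b * s - √c / s) ^ 2) := by
  rw [← exp_add, sqrt_mul hb]
  congr 1
  field_simp
  linear_combination s ^ 4 * sq_sqrt hb + sq_sqrt hc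

theorem integrableOn_exp_neg_mul_sq_add_div_sq_Ioi {b c : ℝ} (hb : 0 < b) (hc : 0 ≤ c) :
    IntegrableOn (fun s => exp (-(b * s ^ 2 + c / s ^ 2))) (Ioi 0) := by
  rcases hc.eq_or_lt with rfl | hc
  · simpa using (integrable_exp_neg_mul_sq hb).integrableOn
  have hgauss : Integrable fun u : ℝ => exp (-u ^ 2) := by
    simpa using integrable_exp_neg_mul_sq one_pos
  refine IntegrableOn.congr_fun
    (((integrableOn_Ioi_comp_mul_sub_div (sqrt_pos.2 hb) (sqrt_pos.2 hc) hgauss).const_mul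
      (exp (-(2 * √(b * c)))))) (fun s hs => ?_) measurableSet_Ioi
  exact (exp_neg_mul_sq_add_div_sq hb.le hc.le (ne_of_gt hs)).symm

theorem integral_exp_neg_mul_sq_add_div_sq_Ioi {b c : ℝ} (hb : 0 < b) (hc : 0 ≤ c) :
    ∫ s in Ioi 0, exp (-(b * s ^ 2 + c / s ^ 2)) = √(π / b) / 2 * exp (-(2 * √(b * c))) := by
  rcases hc.eq_or_lt with rfl | hc
  · simpa using integral_gaussian_Ioi b
  have hgauss : Integrable fun u : ℝ => exp (-u ^ 2) := by
    simpa using integrable_exp_neg_mul_sq one_pos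
  have hgauss_integral : ∫ u : ℝ, exp (-u ^ 2) = √π := by simpa using integral_gaussian 1
  rw [setIntegral_congr_fun measurableSet_Ioi
      (fun s hs => exp_neg_mul_sq_add_div_sq hb.le hc.le (ne_of_gt hs)), integral_const_mul,
    integral_comp_mul_sub_div_Ioi_of_even (sqrt_pos.2 hb) (sqrt_pos.2 hc) hgauss (by simp),
    hgauss_integral, sqrt_div pi_pos.le, smul_eq_mul]
  field_simp

theorem eqOn_rpow_two_smul_exp_neg_mul_mul_exp_neg_div_div_sqrt (l c : ℝ) :
    EqOn (fun s => (2 * s ^ ((2 : ℝ) - 1)) •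
        (exp (-l * s ^ (2 : ℝ)) * (exp (-c / s ^ (2 : ℝ)) / √(s ^ (2 : ℝ)))))
      (fun s => 2 * exp (-(l * s ^ 2 + c / s ^ 2))) (Ioi 0) := fun s hs => by
  have : (0 : ℝ) < s := hs
  simp only [rpow_two, show (2 : ℝ) - 1 = 1 by norm_num, rpow_one, sqrt_sq this.le, smul_eq_mul]
  rw [neg_add, exp_add]
  field_simp

theorem integrableOn_exp_neg_mul_mul_exp_neg_div_div_sqrt_Ioi {l c : ℝ} (hl : 0 < l)
    (hc : 0 ≤ c) : IntegrableOn (fun t => exp (-l * t) * (exp (-c / t) / √t)) (Ioi 0) := by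
  rw [← integrableOn_Ioi_comp_rpow_iff _ two_ne_zero, abs_two]
  exact IntegrableOn.congr_fun ((integrableOn_exp_neg_mul_sq_add_div_sq_Ioi hl hc).const_mul 2)
    (eqOn_rpow_two_smul_exp_neg_mul_mul_exp_neg_div_div_sqrt l c).symm measurableSet_Ioi

theorem integral_exp_neg_mul_mul_exp_neg_div_div_sqrt_Ioi {l c : ℝ} (hl : 0 < l) (hc : 0 ≤ c) :
    ∫ t in Ioi 0, exp (-l * t) * (exp (-c / t) / √t) = √(π / l) * exp (-(2 * √(l * c))) := by
  rw [← integral_comp_rpow_Ioi_of_pos two_pos, setIntegral_congr_fun measurableSet_Ioi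
    (eqOn_rpow_two_smul_exp_neg_mul_mul_exp_neg_div_div_sqrt l c), integral_const_mul,
    integral_exp_neg_mul_sq_add_div_sq_Ioi hl hc]
  ring

/-- Laplace transform of the density `p_r`:
`∫₀^∞ e^{−λt} (1/(r√(2πt))) (1 − exp(−r²/(2t))) dt = (1/(√(2λ)r)) (1 − exp(−√(2λ)r))`
for `r > 0`, `λ > 0` (equivalence of statements (c) and (d) of the paper). -/
theorem ultimateMinimumTimeDensity_laplaceTransform (r : ℝ) (hr : 0 < r) (l : ℝ) (hl : 0 < l) :
    ∫ t in Set.Ioi (0 : ℝ),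
      Real.exp (-l * t) *
        (1 / (r * Real.sqrt (2 * Real.pi * t)) * (1 - Real.exp (-r ^ 2 / (2 * t))))
      = 1 / (Real.sqrt (2 * l) * r) * (1 - Real.exp (-(Real.sqrt (2 * l) * r))) := by
  set F : ℝ → ℝ → ℝ := fun c t => exp (-l * t) * (exp (-c / t) / √t)
  have hc : 0 ≤ r ^ 2 / 2 := by positivity
  have hdensity : EqOn (fun t => exp (-l * t) *
      (1 / (r * √(2 * π * t)) * (1 - exp (-r ^ 2 / (2 * t)))))
      (fun t => (r * √(2 * π))⁻¹ * (F 0 t - F (r ^ 2 / 2) t)) (Ioi 0) := fun t _ => by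
    simp only [F, sqrt_mul (by positivity : (0 : ℝ) ≤ 2 * π), neg_div, zero_div, neg_zero, exp_zero]
    field_simp
  have hexponent : 2 * √(l * (r ^ 2 / 2)) = √(2 * l) * r := by
    have : l * (r ^ 2 / 2) = (√(2 * l) * r / 2) ^ 2 := by
      rw [div_pow, mul_pow, sq_sqrt (by positivity)]
      ring
    rw [this, sqrt_sq (by positivity)]
    ring
  have hconst : (r * √(2 * π))⁻¹ * √(π / l) = 1 / (√(2 * l) * r) := by
    rw [sqrt_mul zero_le_two, sqrt_mul zero_le_two, sqrt_div pi_pos.le]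
    have : 0 < √π := sqrt_pos.2 pi_pos
    have : 0 < √l := sqrt_pos.2 hl
    field_simp
  rw [setIntegral_congr_fun measurableSet_Ioi hdensity, integral_const_mul,
    integral_sub (integrableOn_exp_neg_mul_mul_exp_neg_div_div_sqrt_Ioi hl le_rfl)
      (integrableOn_exp_neg_mul_mul_exp_neg_div_div_sqrt_Ioi hl hc),
    integral_exp_neg_mul_mul_exp_neg_div_div_sqrt_Ioi hl le_rfl,
    integral_exp_neg_mul_mul_exp_neg_div_div_sqrt_Ioi hl hc, hexponent, ← hconst]
  simp only [mul_zero, sqrt_zero, neg_zero, exp_zero]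
  ring
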